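/- Let M be the basis-generating polynomial of the rank-3 whirl-plus-point matroid W^{3+} on seven elements. Then ΔM{1,2} = ½(y₆y₃+y₄y₇+y₃y₅+y₅y₇+y₄y₆+y₆y₇+y₄y₃+y₄y₅)² + ½(y₆y₃+y₃y₅+y₄y₃+y₄y₅)² + ½(y₄y₇+y₅y₇+y₆y₇)² + ½y₄²y₆², hence ΔM{1,2} ≥ 0 on all of ℝ⁷. -/
import Mathlib


open MvPolynomial

/-- The deletion `Z^e`: the polynomial `Z` with `y_e` set to `0`. -/
noncomputable def del {m : ℕ} (e : Fin m) (Z : MvPolynomial (Fin m) ℝ) : MvPolynomial (Fin m) ℝ :=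
  aeval (fun i => if i = e then (0 : MvPolynomial (Fin m) ℝ) else X i) Z

/-- Multiaffine: every variable occurs to at most the first power. -/
def Multiaffine {m : ℕ} (Z : MvPolynomial (Fin m) ℝ) : Prop :=
  ∀ e : Fin m, Z.degreeOf e ≤ 1


/-- The basis-generating polynomial of `W^{3+}` (the rank-3 whirl with a point
added): the rank-3 matroid on `{1,...,7}` (encoded as `0,...,6 : Fin 7`) whose
lines are `{1,2,3,7}`, `{1,5,6}` and `{3,4,5}`, so that its non-bases are the
triples `{1,2,3}, {1,2,7}, {1,3,7}, {2,3,7}, {1,5,6}, {3,4,5}`. -/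
noncomputable def MW3p : MvPolynomial (Fin 7) ℝ :=
  ∑ B ∈ (Finset.univ : Finset (Fin 7)).powersetCard 3 \
      ({ {0,1,2}, {0,1,6}, {0,2,6}, {1,2,6}, {0,4,5}, {2,3,4} } :
        Finset (Finset (Fin 7))),
    ∏ e ∈ B, X e

lemma MW3p_eq : MW3p =
 X 0*X 1*X 3 + X 0*X 1*X 4 + X 0*X 1*X 5 + X 0*X 2*X 3 + X 0*X 2*X 4 + X 0*X 2*X 5 + X 0*X 3*X 4 + X 0*X 3*X 5 + X 0*X 3*X 6 + X 0*X 4*X 6 + X 0*X 5*X 6 + X 1*X 2*X 3 + X 1*X 2*X 4 + X 1*X 2*X 5 + X 1*X 3*X 4 + X 1*X 3*X 5 + X 1*X 3*X 6 + X 1*X 4*X 5 + X 1*X 4*X 6 + X 1*X 5*X 6 + X 2*X 3*X 5 + X 2*X 3*X 6 + X 2*X 4*X 5 + X 2*X 4*X 6 + X 2*X 5*X 6 + X 3*X 4*X 5 + X 3*X 4*X 6 + X 3*X 5*X 6 + X 4*X 5*X 6 := by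
  rw [MW3p, show ((Finset.univ : Finset (Fin 7)).powersetCard 3 \
      ({ {0,1,2}, {0,1,6}, {0,2,6}, {1,2,6}, {0,4,5}, {2,3,4} } :
        Finset (Finset (Fin 7)))) =
      ({ {0,1,3}, {0,1,4}, {0,1,5}, {0,2,3}, {0,2,4}, {0,2,5}, {0,3,4}, {0,3,5}, {0,3,6}, {0,4,6}, {0,5,6}, {1,2,3}, {1,2,4}, {1,2,5}, {1,3,4}, {1,3,5}, {1,3,6}, {1,4,5}, {1,4,6}, {1,5,6}, {2,3,5}, {2,3,6}, {2,4,5}, {2,4,6}, {2,5,6}, {3,4,5}, {3,4,6}, {3,5,6}, {4,5,6} } : Finset (Finset (Fin 7))) from by decide]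
  simp (config := { decide := true }) only [Finset.sum_insert, Finset.sum_singleton,
    Finset.prod_insert, Finset.prod_singleton, Finset.mem_insert, Finset.mem_singleton]
  ring

lemma d0 : pderiv 0 MW3p =
    X 1*X 3 + X 1*X 4 + X 1*X 5 + X 2*X 3 + X 2*X 4 + X 2*X 5 + X 3*X 4 + X 3*X 5 + X 3*X 6 + X 4*X 6 + X 5*X 6 := by
  rw [MW3p_eq]
  simp (config := { decide := true }) only [map_add, pderiv_mul, pderiv_X, Pi.single_apply,
    mul_zero, zero_mul, mul_one, one_mul, add_zero, zero_add, if_true, if_false]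

lemma d1 : pderiv 1 MW3p =
    X 0*X 3 + X 0*X 4 + X 0*X 5 + X 2*X 3 + X 2*X 4 + X 2*X 5 + X 3*X 4 + X 3*X 5 + X 3*X 6 + X 4*X 5 + X 4*X 6 + X 5*X 6 := by
  rw [MW3p_eq]
  simp (config := { decide := true }) only [map_add, pderiv_mul, pderiv_X, Pi.single_apply,
    mul_zero, zero_mul, mul_one, one_mul, add_zero, zero_add, if_true, if_false]

lemma d01 : pderiv 1 (pderiv 0 MW3p) = X 3 + X 4 + X 5 := by
  rw [d0]
  simp (config := { decide := true }) only [map_add, pderiv_mul, pderiv_X, Pi.single_apply,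
    mul_zero, zero_mul, mul_one, one_mul, add_zero, zero_add, if_true, if_false]

lemma key :
    pderiv 0 MW3p * pderiv 1 MW3p - pderiv 1 (pderiv 0 MW3p) * MW3p =
      C (1/2 : ℝ) * (X 5 * X 2 + X 3 * X 6 + X 2 * X 4 + X 4 * X 6 + X 3 * X 5 + X 5 * X 6 + X 3 * X 2 + X 3 * X 4) ^ 2
      + C (1/2 : ℝ) * (X 5 * X 2 + X 2 * X 4 + X 3 * X 2 + X 3 * X 4) ^ 2
      + C (1/2 : ℝ) * (X 3 * X 6 + X 4 * X 6 + X 5 * X 6) ^ 2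
      + C (1/2 : ℝ) * (X 3 * X 5) ^ 2 := by
  have h2 : (C (1/2 : ℝ) : MvPolynomial (Fin 7) ℝ) * 2 = 1 := by
    rw [show (2 : MvPolynomial (Fin 7) ℝ) = C 2 from (map_ofNat C 2).symm, ← C_mul]
    norm_num
  have key2 :
      (X 5 * X 2 + X 3 * X 6 + X 2 * X 4 + X 4 * X 6 + X 3 * X 5 + X 5 * X 6 + X 3 * X 2 + X 3 * X 4 : MvPolynomial (Fin 7) ℝ) ^ 2
      + (X 5 * X 2 + X 2 * X 4 + X 3 * X 2 + X 3 * X 4) ^ 2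
      + (X 3 * X 6 + X 4 * X 6 + X 5 * X 6) ^ 2
      + (X 3 * X 5) ^ 2
      = 2 * (pderiv 0 MW3p * pderiv 1 MW3p - pderiv 1 (pderiv 0 MW3p) * MW3p) := by
    rw [d01, d0, d1, MW3p_eq]; ring
  calc pderiv 0 MW3p * pderiv 1 MW3p - pderiv 1 (pderiv 0 MW3p) * MW3p
      = C (1/2 : ℝ) * 2 * (pderiv 0 MW3p * pderiv 1 MW3p - pderiv 1 (pderiv 0 MW3p) * MW3p) := by
        rw [h2, one_mul]
    _ = C (1/2 : ℝ) * (2 * (pderiv 0 MW3p * pderiv 1 MW3p - pderiv 1 (pderiv 0 MW3p) * MW3p)) := by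
        ring
    _ = _ := by rw [← key2]; ring

theorem W3p_rayleigh_sos :
    (pderiv 0 MW3p * pderiv 1 MW3p - pderiv 1 (pderiv 0 MW3p) * MW3p =
      C (1/2 : ℝ) * (X 5 * X 2 + X 3 * X 6 + X 2 * X 4 + X 4 * X 6 + X 3 * X 5 + X 5 * X 6 + X 3 * X 2 + X 3 * X 4) ^ 2
      + C (1/2 : ℝ) * (X 5 * X 2 + X 2 * X 4 + X 3 * X 2 + X 3 * X 4) ^ 2
      + C (1/2 : ℝ) * (X 3 * X 6 + X 4 * X 6 + X 5 * X 6) ^ 2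
      + C (1/2 : ℝ) * (X 3 * X 5) ^ 2) ∧
    ∀ y : Fin 7 → ℝ,
      0 ≤ eval y (pderiv 0 MW3p * pderiv 1 MW3p - pderiv 1 (pderiv 0 MW3p) * MW3p) := by
  refine ⟨key, fun y => ?_⟩
  rw [key]
  simp only [map_add, map_mul, map_pow, eval_C, eval_X]
  positivity
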